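/- arXiv:1401.3618 — 3 statements merged into one kernel-verified Lean document; each statement's English description precedes it below -/
import Mathlib

section
/- Let F be a field, C an F-vector space, and let Ĉ = F ⊕ ∏_{i=1}^∞ C^{⊗i}. Define e : C → Ĉ by e(c) = (1, c, c⊗c, c⊗c⊗c, …). Then for any integer t ≥ 1 and any distinct nonzero elements c₁,…,c_t ∈ C, the elements e(c₁),…,e(c_t) are linearly independent in Ĉ over F. -/
open scoped TensorProduct

/-- For a field `F` and an `F`-vector space `C`, let
`Ĉ = ∏_{i≥0} C^{⊗i}` (the `i = 0` component being `F` itself, accounting for the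
leading factor `F`), and let `e : C → Ĉ` send `c` to `(1, c, c ⊗ c, …)`, i.e. the
sequence whose `i`-th component is the `i`-fold tensor power `c^{⊗i}`.
Then for any `t ≥ 1` and distinct nonzero `c₁, …, c_t ∈ C`, the elements
`e(c₁), …, e(c_t)` are linearly independent over `F`. -/
theorem stmt0 {F : Type} [Field F] {C : Type} [AddCommGroup C] [Module F C]
    (t : ℕ) (ht : 1 ≤ t) (c : Fin t → C) (hinj : Function.Injective c)
    (hne : ∀ i, c i ≠ 0) :
    LinearIndependent F
      (fun i : Fin t =>
        ((fun n : ℕ => PiTensorProduct.tprod F (fun _ : Fin n => c i)) :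
          (n : ℕ) → ⨂[F]^n C)) := by
  rw [linearIndependent_iff']
  intro s g hsum i₀ hi₀
  -- componentwise vanishing
  have hcomp : ∀ n : ℕ,
      ∑ i ∈ s, g i • (PiTensorProduct.tprod F (fun _ : Fin n => c i)) = 0 := by
    intro n
    have h := congrFun hsum n
    simpa [Finset.sum_apply] using h
  -- applying tensor products of linear functionals
  have hA : ∀ (n : ℕ) (φ : Fin n → Module.Dual F C),
      ∑ i ∈ s, g i * ∏ k, φ k (c i) = 0 := by
    intro n φ
    have h := congrArg
      (PiTensorProduct.lift ((MultilinearMap.mkPiAlgebra F (Fin n) F).compLinearMap φ))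
      (hcomp n)
    simpa [map_sum, smul_eq_mul] using h
  -- the same for arbitrary finite sets of functionals
  have hA' : ∀ (T : Finset (Fin t)) (ψ : Fin t → Module.Dual F C),
      ∑ i ∈ s, g i * ∏ j ∈ T, ψ j (c i) = 0 := by
    intro T ψ
    have key : ∀ i, ∏ j ∈ T, ψ j (c i)
        = ∏ k : Fin T.card, ψ ((T.equivFin.symm k : T) : Fin t) (c i) := by
      intro i
      rw [← Finset.prod_coe_sort T (fun j => ψ j (c i))]
      exact (Equiv.prod_comp T.equivFin.symm
        (fun j : T => ψ (j : Fin t) (c i))).symm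
    simp only [key]
    exact hA T.card _
  -- separating functionals
  have hsep : ∀ j : Fin t, ∃ φ : Module.Dual F C,
      j ≠ i₀ → φ (c i₀) - φ (c j) = 1 := by
    intro j
    by_cases hj : j = i₀
    · exact ⟨0, fun h => absurd hj h⟩
    · have hne' : c i₀ - c j ≠ 0 := by
        intro h
        exact hj (hinj (sub_eq_zero.mp h)).symm
      obtain ⟨φ, hφ⟩ := not_forall.mp
        (fun h => hne' ((Module.forall_dual_apply_eq_zero_iff F _).mp h))
      refine ⟨(φ (c i₀ - c j))⁻¹ • φ, fun _ => ?_⟩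
      rw [LinearMap.smul_apply, LinearMap.smul_apply, smul_eq_mul, smul_eq_mul,
        ← mul_sub, ← map_sub, inv_mul_cancel₀ hφ]
  choose ψ hψ using hsep
  set T : Finset (Fin t) := s.erase i₀ with hT
  -- the interpolated sum vanishes
  have hPsum : ∑ i ∈ s, g i * ∏ j ∈ T, (ψ j (c i) - ψ j (c j)) = 0 := by
    have expand : ∀ i, ∏ j ∈ T, (ψ j (c i) - ψ j (c j))
        = ∑ U ∈ T.powerset, (∏ j ∈ U, ψ j (c i)) * ∏ j ∈ T \ U, (-(ψ j (c j))) := by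
      intro i
      rw [← Finset.prod_add]
      simp [sub_eq_add_neg]
    calc ∑ i ∈ s, g i * ∏ j ∈ T, (ψ j (c i) - ψ j (c j))
        = ∑ U ∈ T.powerset,
            (∑ i ∈ s, g i * ∏ j ∈ U, ψ j (c i)) * ∏ j ∈ T \ U, (-(ψ j (c j))) := by
          simp only [expand, Finset.mul_sum]
          rw [Finset.sum_comm]
          refine Finset.sum_congr rfl fun U _ => ?_
          rw [Finset.sum_mul]
          exact Finset.sum_congr rfl fun i _ => (mul_assoc _ _ _).symm
      _ = 0 := by
          refine Finset.sum_eq_zero fun U _ => ?_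
          rw [hA' U ψ, zero_mul]
  -- evaluate the interpolated sum
  rw [← Finset.add_sum_erase _ _ hi₀] at hPsum
  have hzero : ∑ i ∈ s.erase i₀, g i * ∏ j ∈ T, (ψ j (c i) - ψ j (c j)) = 0 := by
    refine Finset.sum_eq_zero fun i hi => ?_
    rw [Finset.prod_eq_zero (show i ∈ T from hi) (by ring), mul_zero]
  have hone : ∏ j ∈ T, (ψ j (c i₀) - ψ j (c j)) = 1 := by
    refine Finset.prod_eq_one fun j hj => ?_
    exact hψ j (Finset.ne_of_mem_erase hj)
  rw [hzero, hone, mul_one, add_zero] at hPsum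
  exact hPsum
end

section
/- Let F be a field and V an F-vector space. For distinct elements x₁,…,x_t of V, consider the truncated exponential vectors p_i = (1, x_i, x_i², …, x_i^{t-1}) in the symmetric algebra S(V), where x_i^j denotes the j-fold product in S(V). Then p₁,…,p_t are linearly independent over F. -/
/-- Let `F` be a field and `V` an `F`-vector space.  The symmetric
algebra `S(V)` is the polynomial algebra `F[b₁, b₂, …]` on a basis of `V`, with
`V` sitting inside as the homogeneous component of degree `1`; accordingly we
model elements of `V ⊆ S(V)` as homogeneous polynomials of degree `1` in
`MvPolynomial σ F`.  If `x₁, …, x_t` are pairwise distinct such elements, the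
truncated exponential vectors `p_i = 1 + x_i + x_i² + ⋯ + x_i^{t-1}` are
linearly independent over `F` in `S(V)`. -/
theorem stmt1 {F : Type} [Field F] {σ : Type}
    (t : ℕ) (x : Fin t → MvPolynomial σ F)
    (hx : ∀ i, (x i).IsHomogeneous 1)
    (hinj : Function.Injective x) :
    LinearIndependent F
      (fun i : Fin t => ∑ j ∈ Finset.range t, (x i) ^ j) := by
  classical
  rw [Fintype.linearIndependent_iff]
  intro g hg i
  -- Step 1: extract homogeneous components: for each j < t, ∑ i, g i • x i ^ j = 0
  have key : ∀ j : Fin t, ∑ i, g i • x i ^ (j : ℕ) = 0 := by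
    intro j
    have := congrArg (MvPolynomial.homogeneousComponent (j : ℕ)) hg
    rw [map_zero, map_sum] at this
    rw [← this]
    refine Finset.sum_congr rfl fun i _ => ?_
    rw [LinearMap.map_smul, map_sum]
    congr 1
    rw [Finset.sum_eq_single (j : ℕ)]
    · rw [MvPolynomial.homogeneousComponent_of_mem
        ((MvPolynomial.mem_homogeneousSubmodule _ _).mpr (by simpa using (hx i).pow (j : ℕ)))]
      simp
    · intro k _ hk
      rw [MvPolynomial.homogeneousComponent_of_mem
        ((MvPolynomial.mem_homogeneousSubmodule _ _).mpr (by simpa using (hx i).pow k))]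
      simp [Ne.symm hk]
    · intro h
      exact absurd j.isLt (by simpa using h)
  -- Step 2: Vandermonde argument
  set c : Fin t → MvPolynomial σ F := fun i => MvPolynomial.C (g i) with hc
  have hmul : (Matrix.vandermonde x).transpose.mulVec c = 0 := by
    funext j
    have := key j
    simp only [Matrix.mulVec, Matrix.transpose_apply, Matrix.vandermonde,
      Matrix.of_apply, dotProduct, hc]
    calc ∑ i, x i ^ (j : ℕ) * MvPolynomial.C (g i)
        = ∑ i, g i • x i ^ (j : ℕ) := by
          refine Finset.sum_congr rfl fun i _ => ?_
          rw [MvPolynomial.smul_eq_C_mul, mul_comm]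
      _ = 0 := this
  have hdet : ((Matrix.vandermonde x).transpose).det ≠ 0 := by
    rw [Matrix.det_transpose, Matrix.det_vandermonde_ne_zero_iff]
    exact hinj
  have := Matrix.eq_zero_of_mulVec_eq_zero hdet hmul
  have hci : c i = 0 := congrFun this i
  have : MvPolynomial.C (g i) = (0 : MvPolynomial σ F) := hci
  exact (map_eq_zero_iff _ (MvPolynomial.C_injective σ F)).mp this
end

section
/- Let C be a free R-module over a commutative ring R that is either Z/p for a prime p or a subring of Q, with field of fractions F. Define Ĉ = R ⊕ ∏_{i=1}^∞ C^{⊗i} (tensor products over Z) and e(c) = (1, c, c⊗c, …). Then the R-linear extension of e to the group ring R[C] (regarding C as an abelian group), ē : R[C] → Ĉ, is injective. -/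
open scoped TensorProduct

section Aux

variable {R : Type} [CommRing R] {C : Type} [AddCommGroup C] [Module R C]

/-- The "character" attached to a function `w : ι → R`: the monoid homomorphism from the
free commutative monoid on `ι` (written multiplicatively as `Multiplicative (ι →₀ ℕ)`)
to `R` sending a monomial `d` to `∏ i, (w i) ^ d i`. -/
noncomputable def stmt3Char {ι : Type*} (w : ι → R) :
    Multiplicative (ι →₀ ℕ) →* R where
  toFun d := ((Finsupp.toMultiset (Multiplicative.toAdd d)).map w).prod
  map_one' := by simp
  map_mul' d₁ d₂ := by
    simp [Finsupp.toMultiset_add]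

theorem stmt3Char_apply_single {ι : Type*} (w : ι → R) (i : ι) :
    stmt3Char w (Multiplicative.ofAdd (Finsupp.single i 1)) = w i := by
  simp [stmt3Char, Finsupp.toMultiset_single]

end Aux

/-- Let `R` be either `ℤ/p` for a prime `p` or a subring of `ℚ`, and let
`C` be a free `R`-module.  With `Ĉ = ∏_{i≥0} C^{⊗i}` (the `0`-th tensor power being
the ground ring, accounting for the leading summand) and `e(c) = (1, c, c⊗c, …)`,
the `R`-linear extension `ē : R[C] → Ĉ` of `e` to the group ring of the additive
group underlying `C` — i.e. the linear map sending the basis element `[c]` to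
`e(c)` — is injective. -/
theorem stmt3 {R : Type} [CommRing R]
    (hR : (∃ p : ℕ, p.Prime ∧ Nonempty (R ≃+* ZMod p)) ∨
          (∃ f : R →+* ℚ, Function.Injective f))
    {C : Type} [AddCommGroup C] [Module R C] [Module.Free R C] :
    Function.Injective
      (Finsupp.linearCombination R
        (fun c : C =>
          ((fun n : ℕ => PiTensorProduct.tprod R (fun _ : Fin n => c)) :
            (n : ℕ) → ⨂[R]^n C))) := by
  classical
  -- In both cases, `R` has no zero divisors.
  haveI : NoZeroDivisors R := by
    constructor
    intro a b hab
    rcases hR with ⟨p, hp, ⟨eq⟩⟩ | ⟨f, hf⟩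
    · haveI := Fact.mk hp
      have h : eq a * eq b = 0 := by rw [← map_mul, hab, map_zero]
      rcases mul_eq_zero.mp h with h | h
      · exact Or.inl (eq.injective (by rw [h, map_zero]))
      · exact Or.inr (eq.injective (by rw [h, map_zero]))
    · have h : f a * f b = 0 := by rw [← map_mul, hab, map_zero]
      rcases mul_eq_zero.mp h with h | h
      · exact Or.inl (hf (by rw [h, map_zero]))
      · exact Or.inr (hf (by rw [h, map_zero]))
  set ι := Module.Free.ChooseBasisIndex R C
  set b : Module.Basis ι R C := Module.Free.chooseBasis R C with hb
  -- The characters attached to points of `C` via their coordinates.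
  set χ : C → (Multiplicative (ι →₀ ℕ) →* R) := fun c => stmt3Char (fun i => b.repr c i)
    with hχ
  have hχinj : Function.Injective χ := by
    intro c c' h
    apply b.repr.injective
    ext i
    have := congrArg (fun φ : Multiplicative (ι →₀ ℕ) →* R =>
      φ (Multiplicative.ofAdd (Finsupp.single i 1))) h
    simpa only [hχ, stmt3Char_apply_single] using this
  -- The linear map from `∏ n, ⨂[R]^n C` to functions on the free monoid, applying
  -- a product of coordinate functionals to a suitable tensor power component.
  set L : ∀ d : Multiplicative (ι →₀ ℕ), List ι :=
    fun d => (Finsupp.toMultiset (Multiplicative.toAdd d)).toList with hL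
  set T : (∀ n : ℕ, ⨂[R]^n C) →ₗ[R] (Multiplicative (ι →₀ ℕ) → R) :=
    LinearMap.pi (fun d =>
      (PiTensorProduct.lift
        ((MultilinearMap.mkPiAlgebra R (Fin (L d).length) R).compLinearMap
          (fun j => b.coord ((L d).get j)))).comp
        (LinearMap.proj (L d).length)) with hT
  -- `T` sends `e c` to the character `χ c`.
  have hTe : (⇑T ∘ fun c : C =>
      ((fun n : ℕ => PiTensorProduct.tprod R (fun _ : Fin n => c)) :
        (n : ℕ) → ⨂[R]^n C)) = fun c => ⇑(χ c) := by
    funext c d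
    show T _ d = _
    rw [hT]
    simp only [LinearMap.pi_apply, LinearMap.comp_apply, LinearMap.proj_apply]
    rw [PiTensorProduct.lift.tprod, MultilinearMap.compLinearMap_apply,
      MultilinearMap.mkPiAlgebra_apply]
    have h1 : (∏ j : Fin (L d).length, b.coord ((L d).get j) c) =
        ((L d).map (fun i => b.repr c i)).prod := by
      rw [← List.ofFn_getElem_eq_map, List.prod_ofFn]
      rfl
    rw [h1]
    show _ = ((Finsupp.toMultiset (Multiplicative.toAdd d)).map (fun i => b.repr c i)).prod
    simp only [hL]
    conv_rhs => rw [← Multiset.coe_toList (Finsupp.toMultiset (Multiplicative.toAdd d)),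
      Multiset.map_coe, Multiset.prod_coe]
  have li : LinearIndependent R
      (fun c : C =>
        ((fun n : ℕ => PiTensorProduct.tprod R (fun _ : Fin n => c)) :
          (n : ℕ) → ⨂[R]^n C)) := by
    apply LinearIndependent.of_comp T
    rw [hTe]
    haveI : Nontrivial R := by
      rcases hR with ⟨p, hp, ⟨eq⟩⟩ | ⟨f, hf⟩
      · haveI := Fact.mk hp
        exact eq.toEquiv.nontrivial
      · exact f.domain_nontrivial
    haveI : IsDomain R := NoZeroDivisors.to_isDomain R
    exact (linearIndependent_monoidHom (Multiplicative (ι →₀ ℕ)) R).comp χ hχinj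
  exact li
end
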